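/- Let μ be a finite Borel measure on ℝ^N, t > 0, and F = {Mμ ≤ t} the closed set where the maximal function of μ is at most t. Then the restriction μ⌊F is absolutely continuous with respect to Lebesgue measure, with density f satisfying |f| ≤ t almost everywhere; in particular |μ|(A ∩ F) ≤ t|A| for every Borel set A ⊆ ℝ^N. -/
import Mathlib


open MeasureTheory Metric Set Filter
open scoped ENNReal Topology

noncomputable section

/-- The maximal function of a Borel measure:
`Mμ(x) = sup_{r>0} μ(B_r(x)) / |B_r(x)|`. -/
def measMaxFn {N : ℕ} (μ : Measure (EuclideanSpace ℝ (Fin N)))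
    (x : EuclideanSpace ℝ (Fin N)) : ℝ≥0∞ :=
  ⨆ (r : ℝ) (_ : 0 < r), μ (ball x r) / volume (ball x r)

/-- pointwise ball bound from maximal function bound -/
lemma ball_bound {N : ℕ} {μ : Measure (EuclideanSpace ℝ (Fin N))} {t : ℝ}
    {x : EuclideanSpace ℝ (Fin N)} (hx : measMaxFn μ x ≤ ENNReal.ofReal t)
    {r : ℝ} (hr : 0 < r) :
    μ (ball x r) ≤ ENNReal.ofReal t * volume (ball x r) := by
  have h1 : μ (ball x r) / volume (ball x r) ≤ ENNReal.ofReal t :=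
    le_trans (le_iSup₂ (f := fun (r : ℝ) (_ : 0 < r) => μ (ball x r) / volume (ball x r)) r hr) hx
  exact (ENNReal.div_le_iff (measure_ball_pos _ _ hr).ne' measure_ball_lt_top.ne).1 h1

/-- closed ball bound -/
lemma closedBall_bound {N : ℕ} {μ : Measure (EuclideanSpace ℝ (Fin N))} {t : ℝ}
    {x : EuclideanSpace ℝ (Fin N)} (hx : measMaxFn μ x ≤ ENNReal.ofReal t)
    {r : ℝ} (hr : 0 < r) :
    μ (closedBall x r) ≤ ENNReal.ofReal t * volume (closedBall x r) := by
  set s : ℕ → Set (EuclideanSpace ℝ (Fin N)) := fun n => ball x (r + 1 / (n + 1)) with hs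
  have hmono : Antitone s := fun m n hmn => by
    apply ball_subset_ball
    have : (1 : ℝ) / (n + 1) ≤ 1 / (m + 1) := by
      apply one_div_le_one_div_of_le (by positivity)
      exact_mod_cast Nat.succ_le_succ hmn
    linarith
  have hiInter : ⋂ n, s n = closedBall x r := by
    ext y
    simp only [hs, mem_iInter, mem_ball, mem_closedBall]
    constructor
    · intro h
      by_contra hlt
      push_neg at hlt
      obtain ⟨n, hn⟩ := exists_nat_one_div_lt (sub_pos.2 hlt)
      have := h n
      linarith
    · intro h n
      have : (0:ℝ) < 1 / (n + 1) := by positivity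
      linarith
  have htend : Tendsto (fun n => volume (s n)) atTop (𝓝 (volume (closedBall x r))) := by
    rw [← hiInter]
    exact tendsto_measure_iInter_atTop
      (fun n => measurableSet_ball.nullMeasurableSet) hmono ⟨0, measure_ball_lt_top.ne⟩
  have htend2 : Tendsto (fun n => ENNReal.ofReal t * volume (s n)) atTop
      (𝓝 (ENNReal.ofReal t * volume (closedBall x r))) :=
    ENNReal.Tendsto.const_mul htend (Or.inr ENNReal.ofReal_ne_top)
  refine ge_of_tendsto' htend2 fun n => ?_
  calc μ (closedBall x r) ≤ μ (s n) := by
        apply measure_mono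
        apply closedBall_subset_ball
        have : (0:ℝ) < 1 / (n + 1) := by positivity
        linarith
    _ ≤ ENNReal.ofReal t * volume (s n) := ball_bound hx (by positivity)

/-- measurability of x ↦ μ (ball x r) -/
lemma measurable_meas_ball {N : ℕ} (μ : Measure (EuclideanSpace ℝ (Fin N))) [SFinite μ]
    (r : ℝ) : Measurable fun x => μ (ball x r) := by
  have hs : MeasurableSet {p : EuclideanSpace ℝ (Fin N) × EuclideanSpace ℝ (Fin N) |
      dist p.2 p.1 < r} :=
    (isOpen_lt (continuous_dist.comp (continuous_snd.prodMk continuous_fst)) continuous_const).measurableSet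
  exact measurable_measure_prodMk_left (ν := μ) hs

/-- measurability of F -/
lemma measurableSet_F {N : ℕ} (μ : Measure (EuclideanSpace ℝ (Fin N))) [IsFiniteMeasure μ]
    (t : ℝ) : MeasurableSet {x : EuclideanSpace ℝ (Fin N) | measMaxFn μ x ≤ ENNReal.ofReal t} := by
  have hEq : {x : EuclideanSpace ℝ (Fin N) | measMaxFn μ x ≤ ENNReal.ofReal t} =
      ⋂ q : ℚ, {x | 0 < (q:ℝ) → μ (ball x (q:ℝ)) ≤ ENNReal.ofReal t * volume (ball x (q:ℝ))} := by
    ext x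
    simp only [mem_setOf_eq, mem_iInter]
    constructor
    · intro hx q hq
      exact ball_bound hx hq
    · intro hx
      rw [measMaxFn]
      refine iSup₂_le fun r hr => ?_
      rw [ENNReal.div_le_iff (measure_ball_pos _ _ hr).ne' measure_ball_lt_top.ne]
      -- approximate from inside by rational balls
      have hne : Nonempty {q : ℚ // 0 < (q:ℝ) ∧ (q:ℝ) < r} := by
        obtain ⟨q, hq0, hqr⟩ := exists_rat_btwn hr
        exact ⟨⟨q, hq0, hqr⟩⟩
      have hUnion : (⋃ q : {q : ℚ // 0 < (q:ℝ) ∧ (q:ℝ) < r}, ball x (q:ℝ)) = ball x r := by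
        apply Subset.antisymm
        · exact iUnion_subset fun q => ball_subset_ball q.2.2.le
        · intro y hy
          rw [mem_ball] at hy
          obtain ⟨q, hq1, hq2⟩ := exists_rat_btwn (max_lt hy hr : max (dist y x) 0 < r)
          have hq0 : 0 < (q:ℝ) := lt_of_le_of_lt (le_max_right _ _) hq1
          exact mem_iUnion.2 ⟨⟨q, hq0, hq2⟩, mem_ball.2 (lt_of_le_of_lt (le_max_left _ _) hq1)⟩
      have hdir : Directed (· ⊆ ·) fun q : {q : ℚ // 0 < (q:ℝ) ∧ (q:ℝ) < r} =>
          ball x (q:ℝ) := by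
        intro a b
        rcases le_total (a:ℚ) b with h | h
        · exact ⟨b, ball_subset_ball (by exact_mod_cast h), subset_rfl⟩
        · exact ⟨a, subset_rfl, ball_subset_ball (by exact_mod_cast h)⟩
      calc μ (ball x r) = ⨆ q : {q : ℚ // 0 < (q:ℝ) ∧ (q:ℝ) < r}, μ (ball x (q:ℝ)) := by
            rw [← hUnion, hdir.measure_iUnion]
        _ ≤ ENNReal.ofReal t * volume (ball x r) := by
            refine iSup_le fun q => le_trans (hx q q.2.1) ?_
            exact mul_le_mul_right (measure_mono (ball_subset_ball q.2.2.le)) _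
  rw [hEq]
  refine MeasurableSet.iInter fun q => ?_
  rcases lt_or_ge 0 (q:ℝ) with hq | hq
  · simp only [hq, true_implies]
    exact measurableSet_le (measurable_meas_ball μ _)
      ((measurable_meas_ball volume _).const_mul _)
  · have : {x : EuclideanSpace ℝ (Fin N) |
        0 < (q:ℝ) → μ (ball x (q:ℝ)) ≤ ENNReal.ofReal t * volume (ball x (q:ℝ))} = univ := by
      ext x
      simp only [mem_setOf_eq, mem_univ, iff_true]
      intro h; exact absurd h (not_lt.2 hq)
    rw [this]; exact MeasurableSet.univ

/-- for a finite Borel measure `μ` and `t > 0`, on the set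
`F = {Mμ ≤ t}` the restriction `μ⌊F` is absolutely continuous with respect to
Lebesgue measure, with density bounded by `t` a.e.; in particular
`μ(A ∩ F) ≤ t |A|` for every Borel set `A`. -/
theorem stmt19 {N : ℕ} (μ : Measure (EuclideanSpace ℝ (Fin N))) [IsFiniteMeasure μ]
    (t : ℝ) (ht : 0 < t) :
    (μ.restrict {x | measMaxFn μ x ≤ ENNReal.ofReal t} ≪ volume) ∧
    (∀ᵐ x ∂(volume : Measure (EuclideanSpace ℝ (Fin N))),
      (μ.restrict {x | measMaxFn μ x ≤ ENNReal.ofReal t}).rnDeriv volume x ≤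
        ENNReal.ofReal t) ∧
    ∀ A : Set (EuclideanSpace ℝ (Fin N)), MeasurableSet A →
      μ (A ∩ {x | measMaxFn μ x ≤ ENNReal.ofReal t}) ≤
        ENNReal.ofReal t * volume A := by
  set F := {x : EuclideanSpace ℝ (Fin N) | measMaxFn μ x ≤ ENNReal.ofReal t} with hF
  have hFm : MeasurableSet F := measurableSet_F μ t
  have hloc : IsLocallyFiniteMeasure (ENNReal.ofReal t • (volume : Measure (EuclideanSpace ℝ (Fin N)))) := by
    constructor
    intro x
    refine ⟨ball x 1, ball_mem_nhds x one_pos, ?_⟩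
    rw [Measure.smul_apply, smul_eq_mul]
    exact ENNReal.mul_lt_top ENNReal.ofReal_lt_top measure_ball_lt_top
  have key : ∀ s : Set (EuclideanSpace ℝ (Fin N)), s ⊆ F →
      μ.restrict F s ≤ ENNReal.ofReal t * volume s := by
    intro s hsF
    have h := (Besicovitch.vitaliFamily μ).measure_le_of_frequently_le
      (ρ := μ.restrict F) (ENNReal.ofReal t • volume)
      (Measure.absolutelyContinuous_of_le Measure.restrict_le_self) s ?_
    · rwa [Measure.smul_apply, smul_eq_mul] at h
    · intro x hx
      apply (Besicovitch.tendsto_filterAt μ x).frequently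
      apply (eventually_mem_nhdsWithin).frequently.mono
      intro r hr
      have hr' : 0 < r := hr
      calc μ.restrict F (closedBall x r) ≤ μ (closedBall x r) :=
            Measure.restrict_le_self _
        _ ≤ ENNReal.ofReal t * volume (closedBall x r) := closedBall_bound (hsF hx) hr'
        _ = (ENNReal.ofReal t • volume) (closedBall x r) := by
            rw [Measure.smul_apply, smul_eq_mul]
  have hle : μ.restrict F ≤ ENNReal.ofReal t • volume := by
    refine Measure.le_intro fun s hs _ => ?_
    rw [Measure.restrict_apply hs, Measure.smul_apply, smul_eq_mul]
    calc μ (s ∩ F) = μ.restrict F (s ∩ F) := by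
          rw [Measure.restrict_apply (hs.inter hFm), inter_assoc, inter_self]
      _ ≤ ENNReal.ofReal t * volume (s ∩ F) := key _ inter_subset_right
      _ ≤ ENNReal.ofReal t * volume s := by gcongr; exact inter_subset_left
  have hac : μ.restrict F ≪ volume :=
    (Measure.absolutelyContinuous_of_le hle).trans (Measure.smul_absolutelyContinuous)
  refine ⟨hac, ?_, ?_⟩
  · -- rnDeriv bound
    set c : NNReal := t.toNNReal with hc
    have hc0 : c ≠ 0 := by simp [hc]; exact ht
    have hcoe : (c : ℝ≥0∞) = ENNReal.ofReal t := by
      simp [hc, ENNReal.ofReal]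
    have hle' : c⁻¹ • μ.restrict F ≤ volume := by
      refine Measure.le_intro fun s hs _ => ?_
      rw [Measure.smul_apply, ENNReal.smul_def, smul_eq_mul, ENNReal.coe_inv hc0]
      have h1 := hle s
      rw [Measure.smul_apply, smul_eq_mul, ← hcoe] at h1
      calc (c : ℝ≥0∞)⁻¹ * μ.restrict F s ≤ (c : ℝ≥0∞)⁻¹ * ((c:ℝ≥0∞) * volume s) := by gcongr
        _ = volume s := by
            rw [← mul_assoc, ENNReal.inv_mul_cancel (by exact_mod_cast hc0) ENNReal.coe_ne_top,
              one_mul]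
    have h2 : (c⁻¹ • μ.restrict F).rnDeriv volume ≤ᵐ[volume] 1 :=
      Measure.rnDeriv_le_one_of_le hle'
    have h3 : (c⁻¹ • μ.restrict F).rnDeriv volume =ᵐ[volume]
        c⁻¹ • (μ.restrict F).rnDeriv volume :=
      Measure.rnDeriv_smul_left' _ _ _
    filter_upwards [h2, h3] with x hx2 hx3
    rw [hx3] at hx2
    simp only [Pi.smul_apply, Pi.one_apply, smul_eq_mul] at hx2
    rw [← hcoe]
    calc (μ.restrict F).rnDeriv volume x
        = (c : ℝ≥0∞) * ((c : ℝ≥0∞)⁻¹ * (μ.restrict F).rnDeriv volume x) := by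
          rw [← mul_assoc, ENNReal.mul_inv_cancel (by exact_mod_cast hc0) ENNReal.coe_ne_top,
            one_mul]
      _ ≤ (c : ℝ≥0∞) * 1 := by
          gcongr
          rw [ENNReal.smul_def, smul_eq_mul, ENNReal.coe_inv hc0] at hx2
          exact hx2
      _ = c := mul_one _
  · intro A hA
    calc μ (A ∩ F) = μ.restrict F (A ∩ F) := by
          rw [Measure.restrict_apply (hA.inter hFm), inter_assoc, inter_self]
      _ ≤ ENNReal.ofReal t * volume (A ∩ F) := key _ inter_subset_right
      _ ≤ ENNReal.ofReal t * volume A := by gcongr; exact inter_subset_left
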